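/- Let X be an n × (n+1) real matrix all of whose maximal (n × n) minors have the same sign. If X' is obtained from X by switching two columns whose indices have the same parity, then all maximal minors of X' have the opposite sign. -/

import Mathlib

/-!
Bordering `X` by the unit row `e_j` on top gives a square matrix whose determinant is
`(-1)^j` times the maximal minor of `X` omitting column `j`. Permuting the columns of `X` by
`σ` permutes the columns of the bordered matrix (with border `e_{σ j}`), which multiplies its
determinant by `sign σ`. For a transposition of two indices of equal parity, `sign σ = -1` and
`(-1)^{σ j} = (-1)^j`, so every maximal minor of the swapped matrix is minus a maximal minor
of `X`; hence the common sign flips.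
-/

theorem Fin.neg_one_pow_swap_apply {R : Type*} [Ring R] {m : ℕ} {p q : Fin m}
    (hpar : (p : ℕ) % 2 = (q : ℕ) % 2) (j : Fin m) :
    (-1 : R) ^ (Equiv.swap p q j : ℕ) = (-1) ^ (j : ℕ) := by
  rw [neg_one_pow_eq_pow_mod_two, neg_one_pow_eq_pow_mod_two (j : ℕ), Equiv.swap_apply_def]
  split_ifs with hp hq
  · rw [hp, hpar]
  · rw [hq, hpar]
  · rfl

namespace Matrix

variable {R : Type*} [CommRing R] {n : ℕ}

theorem det_cons_single_row (X : Matrix (Fin n) (Fin (n + 1)) R) (j : Fin (n + 1)) :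
    (of (vecCons (Pi.single j 1) (of.symm X))).det =
      (-1) ^ (j : ℕ) * (X.submatrix id j.succAbove).det := by
  rw [det_succ_row_zero, Finset.sum_eq_single j]
  · simp [submatrix]
  · intro k _ hk
    simp [hk]
  · simp

theorem neg_one_pow_mul_det_submatrix_perm_succAbove (X : Matrix (Fin n) (Fin (n + 1)) R)
    (σ : Equiv.Perm (Fin (n + 1))) (j : Fin (n + 1)) :
    (-1) ^ (j : ℕ) * ((X.submatrix id σ).submatrix id j.succAbove).det =
      Equiv.Perm.sign σ * ((-1) ^ (σ j : ℕ) * (X.submatrix id (σ j).succAbove).det) := by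
  have bordered : of (vecCons (Pi.single j 1) (of.symm (X.submatrix id σ))) =
      (of (vecCons (Pi.single (σ j) 1) (of.symm X))).submatrix id σ := by
    ext i k
    refine Fin.cases ?_ (fun i => ?_) i
    · simp [Pi.single_apply, σ.apply_eq_iff_eq]
    · simp
  rw [← det_cons_single_row, ← det_cons_single_row, bordered, det_permute']

theorem det_submatrix_swap_succAbove (X : Matrix (Fin n) (Fin (n + 1)) R) {p q : Fin (n + 1)}
    (hpq : p ≠ q) (hpar : (p : ℕ) % 2 = (q : ℕ) % 2) (j : Fin (n + 1)) :
    ((X.submatrix id (Equiv.swap p q)).submatrix id j.succAbove).det =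
      -(X.submatrix id (Equiv.swap p q j).succAbove).det := by
  have h := X.neg_one_pow_mul_det_submatrix_perm_succAbove (Equiv.swap p q) j
  rw [Equiv.Perm.sign_swap hpq, Fin.neg_one_pow_swap_apply hpar] at h
  have hunit : IsUnit ((-1 : R) ^ (j : ℕ)) := isUnit_neg_one.pow _
  refine hunit.mul_left_cancel ?_
  rw [h]
  push_cast
  ring

end Matrix

theorem minors_flip_sign_on_same_parity_swap {n : ℕ} (X : Matrix (Fin n) (Fin (n + 1)) ℝ)
    (p q : Fin (n + 1)) (hpq : p ≠ q) (hpar : (p : ℕ) % 2 = (q : ℕ) % 2)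
    (hsign : (∀ j : Fin (n + 1), 0 < (X.submatrix id (Fin.succAbove j)).det) ∨
      (∀ j : Fin (n + 1), (X.submatrix id (Fin.succAbove j)).det < 0)) :
    ∀ j j' : Fin (n + 1),
      (X.submatrix id (Fin.succAbove j)).det *
        ((X.submatrix id (Equiv.swap p q)).submatrix id (Fin.succAbove j')).det < 0 := by
  intro j j'
  rw [X.det_submatrix_swap_succAbove hpq hpar j']
  rcases hsign with hpos | hneg
  · exact mul_neg_of_pos_of_neg (hpos j) (neg_neg_of_pos (hpos _))
  · exact mul_neg_of_neg_of_pos (hneg j) (neg_pos.mpr (hneg _))
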